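/- arXiv:1701.07365 — 5 statements merged into one kernel-verified Lean document; each statement's English description precedes it below -/
import Mathlib

section
/- Let F : {-1,1}^ℕ → ℝ depend on finitely many coordinates under the product Bernoulli measure P = ⊗_k (p_k δ_{+1} + q_k δ_{−1}), and suppose F is integrable. Then Var(F) ≤ E[Σ_k (D_k F)^2], where D_k F := √(p_k q_k)(F_k^+ − F_k^−). (Discrete Poincaré inequality.) -/
/-!
Induction on the number of coordinates, peeling off the first one. Writing `F₊, F₋` for `F` with
the first coordinate fixed to `±1` and `G = p₀ F₊ + q₀ F₋` for the average over it, the two-point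
identity `p₀ F₊² + q₀ F₋² = G² + p₀ q₀ (F₊ - F₋)²` splits `Var F` into `Var G` plus
`E[(D₀ F)²]`. The induction hypothesis bounds `Var G` by the energy of `G`, and convexity of the
square bounds `(D_j G)²` by the average of `(D_j F₊)²` and `(D_j F₋)²`.
-/

open Finset

/-- Discrete Malliavin derivative on the finite cube `{-1,1}^m` (coordinates
encoded by `Bool`, `true ↔ +1`). -/
noncomputable def Dfin {m : ℕ} (p q : Fin m → ℝ) (F : (Fin m → Bool) → ℝ) (k : Fin m)
    (ω : Fin m → Bool) : ℝ :=
  Real.sqrt (p k * q k) * (F (Function.update ω k true) - F (Function.update ω k false))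

/-- Expectation under the product Bernoulli measure `⊗_k (p_k δ_{+1} + q_k δ_{-1})`
on `{-1,1}^m`. -/
noncomputable def Efin {m : ℕ} (p q : Fin m → ℝ) (F : (Fin m → Bool) → ℝ) : ℝ :=
  ∑ ω : Fin m → Bool, (∏ k, if ω k then p k else q k) * F ω

section TwoPoint

variable {p q : ℝ}

lemma two_point_second_moment (hpq : p + q = 1) (a b : ℝ) :
    p * a ^ 2 + q * b ^ 2 = (p * a + q * b) ^ 2 + p * q * (a - b) ^ 2 := by
  obtain rfl : q = 1 - p := by linarith
  ring

lemma sq_convex_comb_le (hp : 0 ≤ p) (hq : 0 ≤ q) (hpq : p + q = 1) (a b : ℝ) :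
    (p * a + q * b) ^ 2 ≤ p * a ^ 2 + q * b ^ 2 := by
  rw [two_point_second_moment hpq]
  have : 0 ≤ p * q * (a - b) ^ 2 := by positivity
  linarith

end TwoPoint

section Expectation

variable {m : ℕ}

lemma Efin_add (p q : Fin m → ℝ) (f g : (Fin m → Bool) → ℝ) :
    Efin p q (fun ω => f ω + g ω) = Efin p q f + Efin p q g := by
  simp only [Efin, mul_add, sum_add_distrib]

lemma Efin_mono {p q : Fin m → ℝ} (hp : ∀ k, 0 ≤ p k) (hq : ∀ k, 0 ≤ q k)
    {f g : (Fin m → Bool) → ℝ} (h : ∀ ω, f ω ≤ g ω) : Efin p q f ≤ Efin p q g := by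
  refine sum_le_sum fun ω _ => mul_le_mul_of_nonneg_left (h ω) ?_
  exact prod_nonneg fun k _ => by split <;> simp [hp, hq]

lemma Efin_cons (p q : Fin (m + 1) → ℝ) (F : (Fin (m + 1) → Bool) → ℝ) :
    Efin p q F = Efin (Fin.tail p) (Fin.tail q)
      (fun ω => p 0 * F (Fin.cons true ω) + q 0 * F (Fin.cons false ω)) := by
  rw [Efin, ← (Fin.consEquiv fun _ => Bool).sum_comp, Fintype.sum_prod_type, Fintype.sum_bool,
    Efin, ← sum_add_distrib]
  refine sum_congr rfl fun ω _ => ?_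
  simp only [Fin.consEquiv, Equiv.coe_fn_mk, Fin.prod_univ_succ, Fin.cons_zero, Fin.cons_succ, Fin.tail,
    if_true, Bool.false_eq_true, if_false]
  ring

end Expectation

section Derivative

variable {m : ℕ}

lemma Dfin_linear_comb (p q : Fin m → ℝ) (a b : ℝ) (f g : (Fin m → Bool) → ℝ) (k : Fin m)
    (ω : Fin m → Bool) :
    Dfin p q (fun ω => a * f ω + b * g ω) k ω = a * Dfin p q f k ω + b * Dfin p q g k ω := by
  simp only [Dfin]
  ring

lemma Dfin_cons_zero (p q : Fin (m + 1) → ℝ) (F : (Fin (m + 1) → Bool) → ℝ) (b : Bool)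
    (ω : Fin m → Bool) :
    Dfin p q F 0 (Fin.cons b ω)
      = Real.sqrt (p 0 * q 0) * (F (Fin.cons true ω) - F (Fin.cons false ω)) := by
  simp only [Dfin, Fin.update_cons_zero]

lemma Dfin_cons_succ (p q : Fin (m + 1) → ℝ) (F : (Fin (m + 1) → Bool) → ℝ) (b : Bool)
    (j : Fin m) (ω : Fin m → Bool) :
    Dfin p q F j.succ (Fin.cons b ω)
      = Dfin (Fin.tail p) (Fin.tail q) (fun ω => F (Fin.cons b ω)) j ω := by
  simp only [Dfin, ← Fin.cons_update, Fin.tail]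

lemma sum_sq_Dfin_cons (p q : Fin (m + 1) → ℝ) (hpq : 0 ≤ p 0 * q 0)
    (F : (Fin (m + 1) → Bool) → ℝ) (b : Bool) (ω : Fin m → Bool) :
    ∑ k, Dfin p q F k (Fin.cons b ω) ^ 2
      = p 0 * q 0 * (F (Fin.cons true ω) - F (Fin.cons false ω)) ^ 2
        + ∑ j, Dfin (Fin.tail p) (Fin.tail q) (fun ω => F (Fin.cons b ω)) j ω ^ 2 := by
  simp only [Fin.sum_univ_succ, Dfin_cons_zero, Dfin_cons_succ, mul_pow, Real.sq_sqrt hpq]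

lemma sum_sq_Dfin_average_le (p q : Fin (m + 1) → ℝ) (hp : 0 ≤ p 0) (hq : 0 ≤ q 0)
    (hpq : p 0 + q 0 = 1) (F : (Fin (m + 1) → Bool) → ℝ) (ω : Fin m → Bool) :
    ∑ j, Dfin (Fin.tail p) (Fin.tail q)
          (fun ω => p 0 * F (Fin.cons true ω) + q 0 * F (Fin.cons false ω)) j ω ^ 2
        + p 0 * q 0 * (F (Fin.cons true ω) - F (Fin.cons false ω)) ^ 2
      ≤ p 0 * ∑ k, Dfin p q F k (Fin.cons true ω) ^ 2
        + q 0 * ∑ k, Dfin p q F k (Fin.cons false ω) ^ 2 := by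
  have hconv : ∑ j, Dfin (Fin.tail p) (Fin.tail q)
          (fun ω => p 0 * F (Fin.cons true ω) + q 0 * F (Fin.cons false ω)) j ω ^ 2
      ≤ p 0 * ∑ j, Dfin (Fin.tail p) (Fin.tail q) (fun ω => F (Fin.cons true ω)) j ω ^ 2
        + q 0 * ∑ j, Dfin (Fin.tail p) (Fin.tail q) (fun ω => F (Fin.cons false ω)) j ω ^ 2 := by
    rw [mul_sum, mul_sum, ← sum_add_distrib]
    refine sum_le_sum fun j _ => ?_
    rw [Dfin_linear_comb]
    exact sq_convex_comb_le hp hq hpq _ _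
  rw [sum_sq_Dfin_cons p q (mul_nonneg hp hq), sum_sq_Dfin_cons p q (mul_nonneg hp hq)]
  linear_combination hconv - p 0 * q 0 * (F (Fin.cons true ω) - F (Fin.cons false ω)) ^ 2 * hpq

end Derivative

theorem Efin_sq_sub_sq_le_Efin_sum_sq_Dfin {m : ℕ} (p q : Fin m → ℝ) (hp : ∀ k, 0 ≤ p k)
    (hq : ∀ k, 0 ≤ q k) (hpq : ∀ k, p k + q k = 1) (F : (Fin m → Bool) → ℝ) :
    Efin p q (fun ω => F ω ^ 2) - Efin p q F ^ 2
      ≤ Efin p q (fun ω => ∑ k, Dfin p q F k ω ^ 2) := by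
  induction m with
  | zero => simp [Efin]
  | succ m ih =>
    set G : (Fin m → Bool) → ℝ := fun ω => p 0 * F (Fin.cons true ω) + q 0 * F (Fin.cons false ω)
    set E₀ : (Fin m → Bool) → ℝ :=
      fun ω => p 0 * q 0 * (F (Fin.cons true ω) - F (Fin.cons false ω)) ^ 2
    have hmean : Efin p q F = Efin (Fin.tail p) (Fin.tail q) G := Efin_cons p q F
    have hsecond : Efin p q (fun ω => F ω ^ 2)
        = Efin (Fin.tail p) (Fin.tail q) (fun ω => G ω ^ 2) + Efin (Fin.tail p) (Fin.tail q) E₀ := by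
      rw [Efin_cons, ← Efin_add]
      simp only [G, E₀, two_point_second_moment (hpq 0)]
    have henergy : Efin (Fin.tail p) (Fin.tail q)
          (fun ω => ∑ j, Dfin (Fin.tail p) (Fin.tail q) G j ω ^ 2)
          + Efin (Fin.tail p) (Fin.tail q) E₀
        ≤ Efin p q (fun ω => ∑ k, Dfin p q F k ω ^ 2) := by
      rw [← Efin_add, Efin_cons p q]
      exact Efin_mono (fun _ => hp _) (fun _ => hq _)
        (sum_sq_Dfin_average_le p q (hp 0) (hq 0) (hpq 0) F)
    have hG := ih (Fin.tail p) (Fin.tail q) (fun _ => hp _) (fun _ => hq _) (fun _ => hpq _) G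
    rw [hmean, hsecond]
    linarith

/-- Discrete Poincaré inequality: `Var(F) ≤ E[Σ_k (D_k F)^2]` for functionals of
finitely many Rademacher coordinates. -/
theorem stmt2 {m : ℕ} (p q : Fin m → ℝ) (hp : ∀ k, p k ∈ Set.Ioo (0 : ℝ) 1)
    (hq : ∀ k, q k = 1 - p k) (F : (Fin m → Bool) → ℝ) :
    Efin p q (fun ω => F ω ^ 2) - (Efin p q F) ^ 2
      ≤ Efin p q (fun ω => ∑ k, (Dfin p q F k ω) ^ 2) :=
  Efin_sq_sub_sq_le_Efin_sum_sq_Dfin p q (fun k => (hp k).1.le)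
    (fun k => by linarith [hq k, (hp k).2]) (fun k => by linarith [hq k]) F
end

section
/- Let F = (F_1,…,F_d) be a vector of functions on {-1,1}^ℕ and f : ℝ^d → ℝ be three times partially differentiable with bounded third partial derivatives. Then for every k ∈ ℕ, D_k f(F) = Σ_{i=1}^d (∂f/∂x_i)(F) D_k F_i − (X_k / (4√(p_k q_k))) Σ_{i,j=1}^d [(∂²f/∂x_i∂x_j)(F_k^+) + (∂²f/∂x_i∂x_j)(F_k^−)] (D_k F_i)(D_k F_j) + R_k(F), where the remainder satisfies |R_k(F)| ≤ (5 / (12 p_k q_k)) Σ_{i,j,ℓ=1}^d ‖∂³f/∂x_i∂x_j∂x_ℓ‖_∞ |(D_k F_i)(D_k F_j)(D_k F_ℓ)|. (Multivariate chain rule for the discrete gradient.) -/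
/-- Discrete Malliavin derivative `D_k F = √(p_k q_k) (F_k^+ - F_k^-)`. -/
noncomputable def Dop (p q : ℕ → ℝ) (F : (ℕ → ℝ) → ℝ) (k : ℕ) (ω : ℕ → ℝ) : ℝ :=
  Real.sqrt (p k * q k) * (F (Function.update ω k 1) - F (Function.update ω k (-1)))

/-- Second partial derivative `∂²f/∂x_i∂x_j`. -/
noncomputable def pd2 {d : ℕ} (f : (Fin d → ℝ) → ℝ) (i j : Fin d) (x : Fin d → ℝ) : ℝ :=
  fderiv ℝ (fun y => fderiv ℝ f y (Pi.single i 1)) x (Pi.single j 1)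

/-- Third partial derivative `∂³f/∂x_i∂x_j∂x_ℓ`. -/
noncomputable def pd3 {d : ℕ} (f : (Fin d → ℝ) → ℝ) (i j l : Fin d) (x : Fin d → ℝ) : ℝ :=
  fderiv ℝ (fun y => pd2 f i j y) x (Pi.single l 1)

/-!
Write `a = F(ω_k^+)`, `b = F(ω_k^-)` and `v = a - b`, so that `D_k (f ∘ F) = √(p_k q_k) (f a - f b)`
and `D_k F = √(p_k q_k) v`. On the segment `t ↦ c + t v`, Taylor's formula of order two with
third-order remainder `K / 6`, combined with the mean value bound `K` for the change of the second
derivative, gives the trapezoid-type estimate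
`|f (c + v) - f c - Df(c) v - (D²f(c)[v,v] + D²f(c+v)[v,v]) / 4| ≤ (1/6 + 1/4) K`,
with `K = ∑ M_{ijl} |v_i v_j v_l|`. The base point `c = F(ω)` is `a` or `b` according to the sign
of `X_k`; rescaling by `√(p_k q_k)` gives the chain rule with remainder.
-/

open Finset

lemma ContinuousLinearMap.apply_eq_sum_apply_single {ι : Type*} [Fintype ι] [DecidableEq ι]
    (L : (ι → ℝ) →L[ℝ] ℝ) (v : ι → ℝ) : L v = ∑ i, L (Pi.single i 1) * v i := by
  conv_lhs => rw [← Finset.univ_sum_single v, map_sum]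
  refine sum_congr rfl fun i _ => ?_
  rw [mul_comm, ← smul_eq_mul, ← map_smul, ← Pi.single_smul', smul_eq_mul, mul_one]

lemma abs_le_of_hasDerivAt_of_abs_le_pow {φ ψ : ℝ → ℝ} (hφ : ∀ t, HasDerivAt φ (ψ t) t)
    (h0 : φ 0 = 0) {C : ℝ} {n : ℕ} (hψ : ∀ t, 0 ≤ t → |ψ t| ≤ C * t ^ n) {t : ℝ} (ht : 0 ≤ t) :
    |φ t| ≤ C / (n + 1) * t ^ (n + 1) := by
  have hB : ∀ x : ℝ, HasDerivAt (fun t => C / (n + 1) * t ^ (n + 1)) (C * x ^ n) x := fun x => by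
    refine ((hasDerivAt_pow (n + 1) x).const_mul (C / (n + 1))).congr_deriv ?_
    push_cast
    field_simp
  have hφc : Continuous φ := continuous_iff_continuousAt.2 fun t => (hφ t).continuousAt
  simpa [Real.norm_eq_abs] using image_norm_le_of_norm_deriv_right_le_deriv_boundary
    (a := 0) (b := t) hφc.continuousOn (fun x _ => (hφ x).hasDerivWithinAt) (by simp [h0]) hB
    (fun x hx => by simpa [Real.norm_eq_abs] using hψ x hx.1) ⟨ht, le_rfl⟩

lemma abs_taylor_trapezoid_le {g g' g'' g''' : ℝ → ℝ} (h1 : ∀ t, HasDerivAt g (g' t) t)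
    (h2 : ∀ t, HasDerivAt g' (g'' t) t) (h3 : ∀ t, HasDerivAt g'' (g''' t) t)
    {K : ℝ} (hK : ∀ t, |g''' t| ≤ K) :
    |g 1 - g 0 - g' 0 - (g'' 0 + g'' 1) / 4| ≤ 5 / 12 * K := by
  have hd2 : ∀ t, 0 ≤ t → |g'' t - g'' 0| ≤ K * t ^ 1 := fun t ht => by
    simpa using abs_le_of_hasDerivAt_of_abs_le_pow (n := 0)
      (fun t => (h3 t).sub_const (g'' 0)) (by simp) (fun t _ => by simpa using hK t) ht
  have hd1 : ∀ t, 0 ≤ t → |g' t - g' 0 - t * g'' 0| ≤ K / 2 * t ^ 2 := fun t ht => by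
    have := abs_le_of_hasDerivAt_of_abs_le_pow (n := 1)
      (fun t => ((h2 t).sub_const (g' 0)).sub (hasDerivAt_mul_const (g'' 0))) (by simp) hd2 ht
    norm_num at this
    exact this
  have hd0 := abs_le_of_hasDerivAt_of_abs_le_pow (n := 2) (ψ := fun t => g' t - g' 0 - t * g'' 0)
    (φ := fun t => g t - g 0 - t * g' 0 - t ^ 2 / 2 * g'' 0)
    (fun t => ((((h1 t).sub_const (g 0)).sub (hasDerivAt_mul_const (g' 0))).sub
        (((hasDerivAt_pow 2 t).div_const 2).mul_const (g'' 0))).congr_deriv (by ring))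
    (by simp) hd1 zero_le_one
  have hmv := hd2 1 zero_le_one
  norm_num at hd0 hmv
  rw [abs_le] at hd0 hmv ⊢
  constructor <;> linarith [hd0.1, hd0.2, hmv.1, hmv.2]

section Multivariate

variable {d : ℕ} {f : (Fin d → ℝ) → ℝ}

noncomputable def hessQuad (f : (Fin d → ℝ) → ℝ) (x v : Fin d → ℝ) : ℝ :=
  ∑ i, ∑ j, pd2 f i j x * v i * v j

noncomputable def thirdCubic (f : (Fin d → ℝ) → ℝ) (x v : Fin d → ℝ) : ℝ :=
  ∑ i, ∑ j, ∑ l, pd3 f i j l x * v i * v j * v l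

def cubicBound (M : Fin d → Fin d → Fin d → ℝ) (v : Fin d → ℝ) : ℝ :=
  ∑ i, ∑ j, ∑ l, M i j l * |v i * v j * v l|

lemma hessQuad_smul (f : (Fin d → ℝ) → ℝ) (x : Fin d → ℝ) (s : ℝ) (v : Fin d → ℝ) :
    hessQuad f x (s • v) = s ^ 2 * hessQuad f x v := by
  simp only [hessQuad, mul_sum, Pi.smul_apply, smul_eq_mul]
  exact sum_congr rfl fun i _ => sum_congr rfl fun j _ => by ring

lemma cubicBound_smul (M : Fin d → Fin d → Fin d → ℝ) (s : ℝ) (v : Fin d → ℝ) :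
    cubicBound M (s • v) = |s| ^ 3 * cubicBound M v := by
  simp only [cubicBound, mul_sum, Pi.smul_apply, smul_eq_mul]
  refine sum_congr rfl fun i _ => sum_congr rfl fun j _ => sum_congr rfl fun l _ => ?_
  rw [show s * v i * (s * v j) * (s * v l) = s ^ 3 * (v i * v j * v l) by ring, abs_mul, abs_pow]
  ring

lemma abs_thirdCubic_le {M : Fin d → Fin d → Fin d → ℝ}
    (hM : ∀ i j l (x : Fin d → ℝ), |pd3 f i j l x| ≤ M i j l) (x v : Fin d → ℝ) :
    |thirdCubic f x v| ≤ cubicBound M v := by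
  refine (abs_sum_le_sum_abs _ _).trans <| sum_le_sum fun i _ =>
    (abs_sum_le_sum_abs _ _).trans <| sum_le_sum fun j _ =>
    (abs_sum_le_sum_abs _ _).trans <| sum_le_sum fun l _ => ?_
  rw [mul_assoc, mul_assoc, abs_mul, ← mul_assoc]
  exact mul_le_mul_of_nonneg_right (hM i j l x) (abs_nonneg _)

lemma hasDerivAt_comp_lineMap {φ : (Fin d → ℝ) → ℝ} (hφ : Differentiable ℝ φ)
    (c v : Fin d → ℝ) (t : ℝ) :
    HasDerivAt (fun u : ℝ => φ (c + u • v)) (fderiv ℝ φ (c + t • v) v) t := by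
  have hline : HasDerivAt (fun u : ℝ => c + u • v) v t := by
    simpa using ((hasDerivAt_id t).smul_const v).const_add c
  exact (hφ _).hasFDerivAt.comp_hasDerivAt t hline

lemma hasDerivAt_fderiv_comp_lineMap (hf : ContDiff ℝ 2 f) (c v : Fin d → ℝ) (t : ℝ) :
    HasDerivAt (fun u : ℝ => fderiv ℝ f (c + u • v) v) (hessQuad f (c + t • v) v) t := by
  simp only [ContinuousLinearMap.apply_eq_sum_apply_single (fderiv ℝ f _) v]
  have hpartial : ∀ i, Differentiable ℝ (fun x => fderiv ℝ f x (Pi.single i 1)) := fun i =>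
    ((hf.fderiv_right (m := 1) (by norm_num)).clm_apply contDiff_const).differentiable (by norm_num)
  refine (HasDerivAt.fun_sum fun i _ =>
    (hasDerivAt_comp_lineMap (hpartial i) c v t).mul_const (v i)).congr_deriv ?_
  simp only [hessQuad, ContinuousLinearMap.apply_eq_sum_apply_single (fderiv ℝ _ _) v, sum_mul]
  exact sum_congr rfl fun i _ => sum_congr rfl fun j _ => mul_right_comm _ _ _

lemma hasDerivAt_hessQuad_comp_lineMap (hf : ContDiff ℝ 3 f) (c v : Fin d → ℝ) (t : ℝ) :
    HasDerivAt (fun u : ℝ => hessQuad f (c + u • v) v) (thirdCubic f (c + t • v) v) t := by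
  have hpd2 : ∀ i j, Differentiable ℝ (pd2 f i j) := fun i j =>
    ((((hf.fderiv_right (m := 2) (by norm_num)).clm_apply contDiff_const).fderiv_right
      (m := 1) (by norm_num)).clm_apply contDiff_const).differentiable (by norm_num)
  refine (HasDerivAt.fun_sum fun i _ => HasDerivAt.fun_sum fun j _ =>
    ((hasDerivAt_comp_lineMap (hpd2 i j) c v t).mul_const (v i)).mul_const (v j)).congr_deriv ?_
  simp only [thirdCubic, pd3, ContinuousLinearMap.apply_eq_sum_apply_single (fderiv ℝ _ _) v,
    sum_mul]
  exact sum_congr rfl fun i _ => sum_congr rfl fun j _ => sum_congr rfl fun l _ => by ring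

lemma abs_taylor_trapezoid_le_cubicBound (hf : ContDiff ℝ 3 f) {M : Fin d → Fin d → Fin d → ℝ}
    (hM : ∀ i j l (x : Fin d → ℝ), |pd3 f i j l x| ≤ M i j l) (c v : Fin d → ℝ) :
    |f (c + v) - f c - fderiv ℝ f c v - (hessQuad f c v + hessQuad f (c + v) v) / 4|
      ≤ 5 / 12 * cubicBound M v := by
  simpa using abs_taylor_trapezoid_le
    (hasDerivAt_comp_lineMap (hf.differentiable (by norm_num)) c v)
    (hasDerivAt_fderiv_comp_lineMap (hf.of_le (by norm_num)) c v)
    (hasDerivAt_hessQuad_comp_lineMap hf c v) (fun t => abs_thirdCubic_le hM _ v)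

lemma abs_two_point_taylor_le (hf : ContDiff ℝ 3 f) {M : Fin d → Fin d → Fin d → ℝ}
    (hM : ∀ i j l (x : Fin d → ℝ), |pd3 f i j l x| ≤ M i j l) {a b x : Fin d → ℝ} {σ : ℝ}
    (hx : x = a ∧ σ = 1 ∨ x = b ∧ σ = -1) :
    |f a - f b - fderiv ℝ f x (a - b) + σ / 4 * (hessQuad f a (a - b) + hessQuad f b (a - b))|
      ≤ 5 / 12 * cubicBound M (a - b) := by
  rcases hx with ⟨rfl, rfl⟩ | ⟨rfl, rfl⟩
  · have hba : b - x = (-1 : ℝ) • (x - b) := by rw [neg_one_smul, neg_sub]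
    have := abs_taylor_trapezoid_le_cubicBound hf hM x (b - x)
    rw [add_sub_cancel, hba, hessQuad_smul, hessQuad_smul, cubicBound_smul, map_smul] at this
    rw [← abs_neg]
    convert this using 2
    · rw [neg_one_smul, neg_one_sq]
      ring
    · norm_num
  · have := abs_taylor_trapezoid_le_cubicBound hf hM x (a - x)
    rw [add_sub_cancel] at this
    convert this using 2
    ring

end Multivariate

/-- Multivariate chain rule for the discrete gradient, with remainder bound. -/
theorem stmt4 {d : ℕ} (p q : ℕ → ℝ) (hp : ∀ k, p k ∈ Set.Ioo (0 : ℝ) 1)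
    (hq : ∀ k, q k = 1 - p k)
    (F : Fin d → (ℕ → ℝ) → ℝ) (f : (Fin d → ℝ) → ℝ) (hf : ContDiff ℝ 3 f)
    (M : Fin d → Fin d → Fin d → ℝ)
    (hM : ∀ i j l (x : Fin d → ℝ), |pd3 f i j l x| ≤ M i j l)
    (k : ℕ) (ω : ℕ → ℝ) (hω : ω k = 1 ∨ ω k = -1) :
    ∃ R : ℝ,
      Dop p q (fun x => f (fun i => F i x)) k ω
        = (∑ i, fderiv ℝ f (fun i' => F i' ω) (Pi.single i 1) * Dop p q (F i) k ω)
          - (ω k / (4 * Real.sqrt (p k * q k))) *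
              ∑ i, ∑ j,
                (pd2 f i j (fun i' => F i' (Function.update ω k 1))
                  + pd2 f i j (fun i' => F i' (Function.update ω k (-1))))
                * (Dop p q (F i) k ω) * (Dop p q (F j) k ω)
          + R
      ∧ |R| ≤ 5 / (12 * (p k * q k)) *
          ∑ i, ∑ j, ∑ l,
            M i j l * |Dop p q (F i) k ω * Dop p q (F j) k ω * Dop p q (F l) k ω| := by
  obtain ⟨hp0, hp1⟩ := hp k
  have hpq : 0 < p k * q k := mul_pos hp0 (by rw [hq]; linarith)
  have hs : 0 < √(p k * q k) := Real.sqrt_pos.2 hpq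
  set s := √(p k * q k)
  set a : Fin d → ℝ := fun i => F i (Function.update ω k 1)
  set b : Fin d → ℝ := fun i => F i (Function.update ω k (-1))
  set x : Fin d → ℝ := fun i => F i ω
  have hD : (fun i => Dop p q (F i) k ω) = s • (a - b) := rfl
  have hx : x = a ∧ ω k = 1 ∨ x = b ∧ ω k = -1 := by
    rcases hω with h | h
    · exact Or.inl ⟨by simp only [x, a, ← h, Function.update_eq_self], h⟩
    · exact Or.inr ⟨by simp only [x, b, ← h, Function.update_eq_self], h⟩
  have hgrad : ∑ i, fderiv ℝ f x (Pi.single i 1) * Dop p q (F i) k ω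
      = s * fderiv ℝ f x (a - b) := by
    rw [← smul_eq_mul, ← map_smul, ← hD, ContinuousLinearMap.apply_eq_sum_apply_single]
  have hhess : ∑ i, ∑ j, (pd2 f i j a + pd2 f i j b) * Dop p q (F i) k ω * Dop p q (F j) k ω
      = s ^ 2 * (hessQuad f a (a - b) + hessQuad f b (a - b)) := by
    rw [mul_add, ← hessQuad_smul, ← hessQuad_smul, ← hD]
    simp only [hessQuad, ← sum_add_distrib, add_mul]
  have hcubic : ∑ i, ∑ j, ∑ l,
      M i j l * |Dop p q (F i) k ω * Dop p q (F j) k ω * Dop p q (F l) k ω|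
      = s ^ 3 * cubicBound M (a - b) := by
    rw [← abs_of_pos hs, ← cubicBound_smul, ← hD, cubicBound]
  refine ⟨s * (f a - f b - fderiv ℝ f x (a - b)
    + ω k / 4 * (hessQuad f a (a - b) + hessQuad f b (a - b))), ?_, ?_⟩
  · rw [hgrad, hhess]
    show s * (f a - f b) = _
    field_simp
    ring
  · rw [hcubic, abs_mul, abs_of_pos hs]
    calc s * |_| ≤ s * (5 / 12 * cubicBound M (a - b)) :=
          mul_le_mul_of_nonneg_left (abs_two_point_taylor_le hf hM hx) hs.le
      _ = _ := by rw [← Real.sq_sqrt hpq.le]; field_simp; ring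
end

section
/- Let V_i and V_j be the numbers of vertices of degree i and j respectively in the Erdős–Rényi random graph G(n, p) with p = θ/(n−1) for θ ∈ (0,1). Then cov(V_i, V_j) = (1/n) E[V_i] E[V_j] ( (i−θ)(j−θ) / (θ(1 − θ/(n−1))) − 1 ) + 1{i=j} E[V_i]. -/
open Finset

/-- Expectation with respect to the Erdős–Rényi random graph `G(n,p)`. -/
noncomputable def Egraph (n : ℕ) (p : ℝ) (F : (Sym2 (Fin n) → Bool) → ℝ) : ℝ :=
  ∑ σ : Sym2 (Fin n) → Bool, (∏ e : Sym2 (Fin n), if σ e then p else 1 - p) * F σ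

/-- Degree of the vertex `k`. -/
def degOf {n : ℕ} (σ : Sym2 (Fin n) → Bool) (k : Fin n) : ℕ :=
  (Finset.univ.filter (fun l : Fin n => l ≠ k ∧ σ s(k, l) = true)).card

/-- `V_i`: number of vertices of degree `i`. -/
noncomputable def Vdeg (n i : ℕ) (σ : Sym2 (Fin n) → Bool) : ℝ :=
  ∑ k : Fin n, if degOf σ k = i then (1 : ℝ) else 0

/-! Proof idea: `deg k ∼ Bin(n-1, p)`, and for `k ≠ l` conditioning on the edge `kl` leaves
`deg k` and `deg l` as independent shifts of `Bin(n-2, p)` variables, because the other edges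
at `k` and at `l` are disjoint. Hence, with `b = Bin(n-2, p)` and `B = Bin(n-1, p)`,
`E[V_i V_j] = 1{i=j} E[V_i] + n(n-1) (p b(i-1) b(j-1) + (1-p) b(i) b(j))`, and the identities
`(n-1) p b(i-1) = i B(i)` and `(n-1) (1-p) b(i) = (n-1-i) B(i)` turn this into the closed form. -/

section BernoulliProduct

variable {A B E : Type*} [Fintype A] [DecidableEq A] [Fintype B] [DecidableEq B]
  [Fintype E] [DecidableEq E]

noncomputable def bernoulliExpect (p : ℝ) (F : (E → Bool) → ℝ) : ℝ :=
  ∑ σ : E → Bool, (∏ e, if σ e then p else 1 - p) * F σ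

theorem bernoulliExpect_add (p : ℝ) (F G : (E → Bool) → ℝ) :
    bernoulliExpect p (fun σ => F σ + G σ) = bernoulliExpect p F + bernoulliExpect p G := by
  simp only [bernoulliExpect, mul_add, sum_add_distrib]

theorem bernoulliExpect_sum {ι : Type*} (p : ℝ) (s : Finset ι)
    (F : ι → (E → Bool) → ℝ) :
    bernoulliExpect p (fun σ => ∑ k ∈ s, F k σ) = ∑ k ∈ s, bernoulliExpect p (F k) := by
  simp only [bernoulliExpect, mul_sum]
  exact sum_comm

theorem bernoulliExpect_const_mul (p c : ℝ) (F : (E → Bool) → ℝ) :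
    bernoulliExpect p (fun σ => c * F σ) = c * bernoulliExpect p F := by
  simp only [bernoulliExpect, mul_sum]
  exact sum_congr rfl fun _ _ => by ring

theorem bernoulliExpect_mul_const (p c : ℝ) (F : (E → Bool) → ℝ) :
    bernoulliExpect p (fun σ => F σ * c) = bernoulliExpect p F * c := by
  simp only [bernoulliExpect, sum_mul, mul_assoc]

theorem bernoulliExpect_const (p c : ℝ) : bernoulliExpect p (fun _ : E → Bool => c) = c := by
  rw [bernoulliExpect, ← sum_mul,
    ← Fintype.prod_sum fun (_ : E) (b : Bool) => if b then p else 1 - p]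
  simp

theorem bernoulliExpect_comp_equiv (p : ℝ) (e : A ≃ E) (F : (A → Bool) → ℝ) :
    bernoulliExpect p (fun σ : E → Bool => F (σ ∘ e)) = bernoulliExpect p F := by
  refine Fintype.sum_equiv (e.arrowCongr (Equiv.refl Bool)).symm _ _ fun σ => ?_
  simp only [Equiv.arrowCongr_symm, Equiv.arrowCongr_apply, Equiv.refl_symm, Equiv.coe_refl,
    Equiv.symm_symm]
  rw [← e.prod_comp]
  rfl

theorem bernoulliExpect_sumElim (p : ℝ) (F : (A → Bool) → (B → Bool) → ℝ) :
    bernoulliExpect p (fun σ : A ⊕ B → Bool => F (σ ∘ Sum.inl) (σ ∘ Sum.inr))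
      = bernoulliExpect p fun τ => bernoulliExpect p (F τ) := by
  rw [bernoulliExpect, ← (Equiv.sumArrowEquivProdArrow A B Bool).symm.sum_comp,
    Fintype.sum_prod_type]
  refine sum_congr rfl fun τ _ => ?_
  simp only [bernoulliExpect, mul_sum, Fintype.prod_sum_type]
  refine sum_congr rfl fun τ' _ => ?_
  change ((∏ a, if τ a then p else 1 - p) * ∏ b, if τ' b then p else 1 - p) * F τ τ' = _
  ring

theorem bernoulliExpect_comp_embedding (p : ℝ) (ι : A ↪ E) (F : (A → Bool) → ℝ) :
    bernoulliExpect p (fun σ : E → Bool => F (σ ∘ ι)) = bernoulliExpect p F := by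
  classical
  let ε : A ⊕ {e // e ∉ Set.range ι} ≃ E :=
    ((Equiv.ofInjective ι ι.injective).sumCongr (Equiv.refl _)).trans (Equiv.sumCompl _)
  calc bernoulliExpect p (fun σ : E → Bool => F (σ ∘ ι))
      = bernoulliExpect p fun σ : A ⊕ {e // e ∉ Set.range ι} → Bool => F (σ ∘ Sum.inl) :=
        bernoulliExpect_comp_equiv p ε fun σ => F (σ ∘ Sum.inl)
    _ = bernoulliExpect p F := by
        rw [bernoulliExpect_sumElim p fun τ _ => F τ]
        simp only [bernoulliExpect_const]

theorem bernoulliExpect_mul_sumElim (p : ℝ) (F : (A → Bool) → ℝ)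
    (G : (B → Bool) → ℝ) :
    bernoulliExpect p (fun σ : A ⊕ B → Bool => F (σ ∘ Sum.inl) * G (σ ∘ Sum.inr))
      = bernoulliExpect p F * bernoulliExpect p G := by
  rw [bernoulliExpect_sumElim p fun τ τ' => F τ * G τ']
  simp only [bernoulliExpect_const_mul, bernoulliExpect_mul_const]

theorem bernoulliExpect_unit (p : ℝ) (F : (Unit → Bool) → ℝ) :
    bernoulliExpect p F = p * F (fun _ => true) + (1 - p) * F (fun _ => false) := by
  rw [bernoulliExpect, ← (Equiv.funUnique Unit Bool).symm.sum_comp, Fintype.sum_bool]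
  simp only [univ_unique, PUnit.default_eq_unit, Equiv.funUnique_symm_apply, uniqueElim_const,
    ↓reduceIte, prod_const, card_singleton, pow_one, Bool.false_eq_true]
  rfl

end BernoulliProduct

noncomputable def binomialProb (m : ℕ) (p : ℝ) (i : ℕ) : ℝ :=
  m.choose i * p ^ i * (1 - p) ^ (m - i)

section Binomial

variable {A : Type*} [Fintype A] [DecidableEq A]

theorem prod_ite_eq_pow_mul_pow (p : ℝ) (σ : A → Bool) :
    ∏ a, (if σ a then p else 1 - p)
      = p ^ #{a | σ a} * (1 - p) ^ (Fintype.card A - #{a | σ a}) := by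
  rw [prod_ite, prod_const, prod_const, filter_not, card_sdiff_of_subset (filter_subset _ _),
    card_univ]

theorem card_filter_card_eq_choose (i : ℕ) :
    #{σ : A → Bool | #{a | σ a} = i} = (Fintype.card A).choose i := by
  rw [← card_univ, ← card_powersetCard]
  refine card_nbij' (fun σ => ({a | σ a} : Finset A)) (fun s a => a ∈ s) ?_ ?_ ?_ ?_
  · intro σ hσ
    simpa using hσ
  · intro s hs
    simpa [filter_mem_eq_inter] using (mem_powersetCard.mp hs).2
  · intro σ _
    funext a
    simp
  · intro s _
    ext a
    simp

theorem bernoulliExpect_card_eq (p : ℝ) (i : ℕ) :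
    bernoulliExpect p (fun σ : A → Bool => if #{a | σ a} = i then 1 else 0)
      = binomialProb (Fintype.card A) p i := by
  calc bernoulliExpect p (fun σ : A → Bool => if #{a | σ a} = i then 1 else 0)
      = ∑ σ : A → Bool with #{a | σ a} = i, p ^ i * (1 - p) ^ (Fintype.card A - i) := by
        rw [bernoulliExpect, sum_filter]
        refine sum_congr rfl fun σ _ => ?_
        split_ifs with h
        · rw [prod_ite_eq_pow_mul_pow, h, mul_one]
        · rw [mul_zero]
    _ = binomialProb (Fintype.card A) p i := by
        rw [sum_const, card_filter_card_eq_choose, nsmul_eq_mul, binomialProb, mul_assoc]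

theorem bernoulliExpect_card_add_eq (p : ℝ) (c i : ℕ) :
    bernoulliExpect p (fun σ : A → Bool => if #{a | σ a} + c = i then 1 else 0)
      = if c ≤ i then binomialProb (Fintype.card A) p (i - c) else 0 := by
  split_ifs with hci
  · rw [← bernoulliExpect_card_eq]
    congr! 3
    omega
  · convert bernoulliExpect_const (E := A) p 0 using 2
    funext σ
    rw [if_neg (by omega)]

end Binomial

theorem succ_mul_ite_binomialProb_sub_one (m : ℕ) (p : ℝ) (i : ℕ) :
    (m + 1) * p * (if 1 ≤ i then binomialProb m p (i - 1) else 0)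
      = i * binomialProb (m + 1) p i := by
  rcases i with _ | i
  · simp
  · have h : ((m + 1) * m.choose i : ℝ) = (m + 1).choose (i + 1) * (i + 1) := by
      exact_mod_cast Nat.add_one_mul_choose_eq m i
    rw [if_pos (Nat.le_add_left 1 i), Nat.add_sub_cancel, binomialProb, binomialProb,
      Nat.add_sub_add_right]
    push_cast
    linear_combination (p ^ (i + 1) * (1 - p) ^ (m - i)) * h

theorem succ_mul_one_sub_mul_binomialProb (m : ℕ) (p : ℝ) (i : ℕ) :
    (m + 1) * (1 - p) * binomialProb m p i = ((m + 1 : ℝ) - i) * binomialProb (m + 1) p i := by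
  rcases le_or_gt i m with him | hmi
  · have h : (m.choose i * (m + 1) : ℝ) = (m + 1).choose i * ((m + 1 : ℝ) - i) := by
      have h := congrArg (Nat.cast : ℕ → ℝ) (Nat.choose_mul_succ_eq m i)
      push_cast [Nat.cast_sub (Nat.le_succ_of_le him)] at h
      exact h
    rw [binomialProb, binomialProb, Nat.sub_add_comm him, pow_succ]
    linear_combination (p ^ i * (1 - p) ^ (m - i) * (1 - p)) * h
  · rw [binomialProb, Nat.choose_eq_zero_of_lt hmi]
    obtain rfl | hmi' := (Nat.succ_le_of_lt hmi).eq_or_lt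
    · push_cast
      ring
    · rw [binomialProb, Nat.choose_eq_zero_of_lt hmi']
      ring

theorem card_filter_subtype {α : Type*} [Fintype α] (P Q : α → Prop) [DecidablePred P]
    [DecidablePred Q] : #{a : Subtype P | Q a} = #{x | P x ∧ Q x} := by
  rw [← card_map (Function.Embedding.subtype P)]
  congr 1
  ext x
  simp [and_comm]

section Degrees

variable {n : ℕ}

theorem card_filter_incident_eq_degOf (σ : Sym2 (Fin n) → Bool) (k : Fin n) :
    #{a : {m // m ≠ k} | σ s(k, a)} = degOf σ k :=
  card_filter_subtype (· ≠ k) fun m => σ s(k, m)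

theorem degOf_eq_card_add_ite (σ : Sym2 (Fin n) → Bool) {k l : Fin n} (hkl : k ≠ l) :
    degOf σ k = #{a : {m // m ≠ k ∧ m ≠ l} | σ s(k, a)} + if σ s(k, l) then 1 else 0 := by
  have herase : ({m | m ≠ k ∧ σ s(k, m)} : Finset (Fin n)).erase l
      = ({m | (m ≠ k ∧ m ≠ l) ∧ σ s(k, m)} : Finset (Fin n)) := by
    ext m
    simp only [mem_erase, mem_filter, mem_univ, true_and]
    tauto
  rw [card_filter_subtype (fun m => m ≠ k ∧ m ≠ l) fun m => σ s(k, m), ← herase, degOf]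
  split_ifs with h
  · rw [card_erase_add_one]
    simpa using ⟨hkl.symm, h⟩
  · rw [erase_eq_of_notMem (by simpa using fun _ => h), add_zero]

theorem card_subtype_ne_and_ne {k l : Fin n} (hkl : k ≠ l) :
    Fintype.card {m // m ≠ k ∧ m ≠ l} = n - 2 := by
  have h : ({m | m ≠ k ∧ m ≠ l} : Finset (Fin n)) = univ \ {k, l} := by
    ext m
    simp [not_or]
  rw [Fintype.card_subtype, h, card_sdiff_of_subset (subset_univ _), card_univ, Fintype.card_fin,
    card_pair hkl]

theorem bernoulliExpect_degOf_eq (p : ℝ) (k : Fin n) (i : ℕ) :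
    bernoulliExpect p (fun σ => if degOf σ k = i then (1 : ℝ) else 0)
      = binomialProb (n - 1) p i := by
  let ι : {m // m ≠ k} ↪ Sym2 (Fin n) :=
    (Function.Embedding.subtype _).trans (Sym2.mkEmbedding k)
  have h := bernoulliExpect_comp_embedding p ι fun τ => if #{a | τ a} = i then (1 : ℝ) else 0
  simp only [ι, Function.comp_apply, Function.Embedding.trans_apply,
    Function.Embedding.subtype_apply, Sym2.mkEmbedding_apply, card_filter_incident_eq_degOf,
    bernoulliExpect_card_eq] at h
  rw [h, Fintype.card_subtype_compl, Fintype.card_subtype_eq, Fintype.card_fin]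

theorem bernoulliExpect_degOf_eq_mul_degOf_eq (p : ℝ) {k l : Fin n} (hkl : k ≠ l) (i j : ℕ) :
    bernoulliExpect p
        (fun σ => (if degOf σ k = i then (1 : ℝ) else 0) * (if degOf σ l = j then 1 else 0))
      = p * ((if 1 ≤ i then binomialProb (n - 2) p (i - 1) else 0)
          * (if 1 ≤ j then binomialProb (n - 2) p (j - 1) else 0))
        + (1 - p) * (binomialProb (n - 2) p i * binomialProb (n - 2) p j) := by
  set X := {m // m ≠ k ∧ m ≠ l}
  set Y := {m // m ≠ l ∧ m ≠ k}
  let e : Unit ⊕ (X ⊕ Y) → Sym2 (Fin n) :=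
    Sum.elim (fun _ => s(k, l)) (Sum.elim (fun a => s(k, a)) fun b => s(l, b))
  have he : Function.Injective e := by
    refine (Function.injective_of_subsingleton _).sumElim
      (((Sym2.mkEmbedding k).injective.comp Subtype.val_injective).sumElim
        ((Sym2.mkEmbedding l).injective.comp Subtype.val_injective) ?_) ?_
    · rintro ⟨a, -, hal⟩ ⟨b, -, -⟩
      simp [hkl, hal]
    · rintro - (⟨a, hak, hal⟩ | ⟨b, -, hbk⟩)
      · simp [Ne.symm hal, Ne.symm hak]
      · simp [hkl, Ne.symm hbk]
  let ι : Unit ⊕ (X ⊕ Y) ↪ Sym2 (Fin n) := ⟨e, he⟩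
  let F : Bool → (X → Bool) → ℝ := fun b τ =>
    if #{a | τ a} + (if b then 1 else 0) = i then 1 else 0
  let G : Bool → (Y → Bool) → ℝ := fun b τ =>
    if #{a | τ a} + (if b then 1 else 0) = j then 1 else 0
  let H : (Unit → Bool) → (X ⊕ Y → Bool) → ℝ := fun u τ =>
    F (u ()) (τ ∘ Sum.inl) * G (u ()) (τ ∘ Sum.inr)
  calc bernoulliExpect p
        (fun σ => (if degOf σ k = i then (1 : ℝ) else 0) * (if degOf σ l = j then 1 else 0))
      = bernoulliExpect p fun σ : Sym2 (Fin n) → Bool =>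
          H ((σ ∘ ι) ∘ Sum.inl) ((σ ∘ ι) ∘ Sum.inr) := by
        congr 1
        funext σ
        rw [degOf_eq_card_add_ite σ hkl, degOf_eq_card_add_ite σ hkl.symm, Sym2.eq_swap (a := l)]
        rfl
    _ = bernoulliExpect p fun u => bernoulliExpect p (H u) :=
        (bernoulliExpect_comp_embedding p ι _).trans (bernoulliExpect_sumElim p H)
    _ = p * (bernoulliExpect p (F true) * bernoulliExpect p (G true))
          + (1 - p) * (bernoulliExpect p (F false) * bernoulliExpect p (G false)) := by
        rw [bernoulliExpect_unit, ← bernoulliExpect_mul_sumElim, ← bernoulliExpect_mul_sumElim]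
    _ = _ := by
        have hX : Fintype.card X = n - 2 := card_subtype_ne_and_ne hkl
        have hY : Fintype.card Y = n - 2 := card_subtype_ne_and_ne hkl.symm
        simp [F, G, bernoulliExpect_card_add_eq, bernoulliExpect_card_eq, hX, hY]

end Degrees

theorem Egraph_Vdeg (n : ℕ) (p : ℝ) (i : ℕ) :
    Egraph n p (Vdeg n i) = n * binomialProb (n - 1) p i := by
  change bernoulliExpect p (fun σ => ∑ k, _) = _
  rw [bernoulliExpect_sum]
  simp only [bernoulliExpect_degOf_eq, sum_const, card_univ, Fintype.card_fin, nsmul_eq_mul]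

theorem Egraph_Vdeg_mul_Vdeg (n : ℕ) (p : ℝ) (i j : ℕ) :
    Egraph n p (fun σ => Vdeg n i σ * Vdeg n j σ)
      = (if i = j then n * binomialProb (n - 1) p i else 0)
        + n * (n - 1) * (p * ((if 1 ≤ i then binomialProb (n - 2) p (i - 1) else 0)
            * (if 1 ≤ j then binomialProb (n - 2) p (j - 1) else 0))
          + (1 - p) * (binomialProb (n - 2) p i * binomialProb (n - 2) p j)) := by
  set I : Fin n → (Sym2 (Fin n) → Bool) → ℕ → ℝ := fun k σ d =>
    if degOf σ k = d then 1 else 0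
  have hsplit : ∀ σ, Vdeg n i σ * Vdeg n j σ
      = ∑ k, (I k σ i * I k σ j + ∑ l ∈ univ.erase k, I k σ i * I l σ j) := by
    intro σ
    rw [Vdeg, Vdeg, sum_mul_sum]
    exact sum_congr rfl fun k _ => (add_sum_erase _ _ (mem_univ k)).symm
  have hsame : ∀ k σ, I k σ i * I k σ j = if i = j then I k σ i else 0 := by
    intro k σ
    simp only [I]
    split_ifs <;> simp_all
  have hdiag : ∀ k, bernoulliExpect p (fun σ => if i = j then I k σ i else 0)
      = if i = j then binomialProb (n - 1) p i else 0 := by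
    intro k
    split_ifs
    · exact bernoulliExpect_degOf_eq p k i
    · exact bernoulliExpect_const p 0
  have hoff : ∀ k, ∀ l ∈ univ.erase k, bernoulliExpect p (fun σ => I k σ i * I l σ j)
      = p * ((if 1 ≤ i then binomialProb (n - 2) p (i - 1) else 0)
          * (if 1 ≤ j then binomialProb (n - 2) p (j - 1) else 0))
        + (1 - p) * (binomialProb (n - 2) p i * binomialProb (n - 2) p j) :=
    fun k l hl => bernoulliExpect_degOf_eq_mul_degOf_eq p (ne_of_mem_erase hl).symm i j
  change bernoulliExpect p _ = _
  simp only [hsplit, bernoulliExpect_sum, bernoulliExpect_add, hsame, hdiag]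
  rw [sum_congr rfl fun k _ => by
    rw [sum_congr rfl (hoff k), sum_const, card_erase_of_mem (mem_univ k)]]
  rw [sum_const, card_univ, Fintype.card_fin, nsmul_eq_mul, nsmul_eq_mul]
  rcases n.eq_zero_or_pos with rfl | hn
  · simp
  · rw [Nat.cast_sub hn]
    split_ifs <;> push_cast <;> ring

/-- Covariance of degree counts in `G(n, θ/(n-1))`:
`cov(V_i, V_j) = (1/n) E[V_i] E[V_j] ((i-θ)(j-θ)/(θ(1-θ/(n-1))) - 1) + 1{i=j} E[V_i]`. -/
theorem stmt8 (n : ℕ) (hn : 2 ≤ n) (θ : ℝ) (hθ : θ ∈ Set.Ioo (0 : ℝ) 1) (i j : ℕ) :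
    Egraph n (θ / (n - 1)) (fun σ => Vdeg n i σ * Vdeg n j σ)
        - Egraph n (θ / (n - 1)) (Vdeg n i) * Egraph n (θ / (n - 1)) (Vdeg n j)
      = (1 / (n : ℝ)) * Egraph n (θ / (n - 1)) (Vdeg n i)
          * Egraph n (θ / (n - 1)) (Vdeg n j)
          * (((i : ℝ) - θ) * ((j : ℝ) - θ) / (θ * (1 - θ / ((n : ℝ) - 1))) - 1)
        + (if i = j then Egraph n (θ / (n - 1)) (Vdeg n i) else 0) := by
  obtain ⟨m, rfl⟩ : ∃ m, n = m + 2 := ⟨n - 2, by omega⟩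
  obtain ⟨hθ0, hθ1⟩ := hθ
  rw [Egraph_Vdeg_mul_Vdeg, Egraph_Vdeg, Egraph_Vdeg]
  simp only [Nat.add_sub_cancel, show m + 2 - 1 = m + 1 from rfl]
  push_cast
  rw [show (m : ℝ) + 2 - 1 = m + 1 by ring]
  generalize hp : θ / ((m : ℝ) + 1) = p
  obtain rfl : θ = (m + 1) * p := by
    rw [← hp]
    field_simp
  have hp0 : 0 < p := pos_of_mul_pos_right hθ0 (by positivity)
  have hp1 : 0 < 1 - p := by nlinarith
  have hT (i : ℕ) : (if 1 ≤ i then binomialProb m p (i - 1) else 0)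
      = i * binomialProb (m + 1) p i / ((m + 1) * p) := by
    rw [eq_div_iff (by positivity), mul_comm, succ_mul_ite_binomialProb_sub_one]
  have hF (i : ℕ) : binomialProb m p i
      = ((m + 1 : ℝ) - i) * binomialProb (m + 1) p i / ((m + 1) * (1 - p)) := by
    rw [eq_div_iff (by positivity), mul_comm, succ_mul_one_sub_mul_binomialProb]
  rw [hT i, hT j]
  simp only [hF]
  split_ifs <;> field_simp <;> ring
end

section
/- In the voxel model of a random cubical complex on the d-dimensional torus lattice with n^d unit cubes each retained independently with probability p, the expected j-th intrinsic volume equals E[V_j(𝒞)] = Σ_{δ=j}^{d} C(d,δ) n^d (1 − q^{2^{d−δ}}) (−1)^{δ−j} C(δ,j), where q = 1−p. -/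
open Finset
open scoped Classical

/-- Dimension of a cell of the cubical lattice: a cell is encoded by its anchor
`z : Fin d → ZMod n` (torus coordinates) together with `s : Fin d → Bool`
recording in which coordinate directions the cell is extended. -/
def cellDim {d : ℕ} (s : Fin d → Bool) : ℕ :=
  (Finset.univ.filter (fun i => s i = true)).card

/-- The closed `d`-cube anchored at `w` contains the open cell `(z, s)` as a face. -/
def containsCell {d n : ℕ} (w z : Fin d → ZMod n) (s : Fin d → Bool) : Prop :=
  ∀ i, if s i then w i = z i else (w i = z i ∨ w i = z i - 1)

/-- Indicator that the open cell `(z,s)` belongs to the voxel complex `𝒞`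
determined by the retained cubes `σ`. -/
noncomputable def inComplex {d n : ℕ} (σ : (Fin d → ZMod n) → Bool)
    (z : Fin d → ZMod n) (s : Fin d → Bool) : ℝ :=
  if ∃ w, σ w = true ∧ containsCell w z s then 1 else 0

/-- The `j`-th intrinsic volume `V_j(𝒞) = Σ_D ξ_{D,j}` of the voxel complex. -/
noncomputable def Vvox (d n : ℕ) [NeZero n] (j : ℕ)
    (σ : (Fin d → ZMod n) → Bool) : ℝ :=
  ∑ z : Fin d → ZMod n, ∑ s : Fin d → Bool,
    (-1 : ℝ) ^ (cellDim s - j) * ((cellDim s).choose j : ℝ) * inComplex σ z s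

/-- Expectation: each of the `n^d` cubes is retained independently with
probability `p`. -/
noncomputable def Evox (d n : ℕ) [NeZero n] (p : ℝ)
    (F : ((Fin d → ZMod n) → Bool) → ℝ) : ℝ :=
  ∑ σ : (Fin d → ZMod n) → Bool, (∏ w, if σ w then p else 1 - p) * F σ

/-!
By linearity of expectation, `E[V_j(𝒞)]` is the sum over all cells of their coefficient times
the probability that the cell lies in `𝒞`. An open cell of dimension `δ` is a face of exactly
`2^(d-δ)` distinct `d`-cubes (in each free direction `z i` and `z i - 1` differ once `n > 1`),
so by independence it misses `𝒞` with probability `q^(2^(d-δ))`. There are `C(d,δ) n^d` cells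
of dimension `δ`, and those with `δ < j` contribute nothing since `C(δ,j) = 0`.
-/

section Bernoulli

variable {α : Type*} [Fintype α] [DecidableEq α]

noncomputable def bernoulliWeight (p : ℝ) (σ : α → Bool) : ℝ :=
  ∏ w, if σ w then p else 1 - p

lemma sum_bernoulliWeight_mul_prod (p : ℝ) (g : α → Bool → ℝ) :
    ∑ σ : α → Bool, bernoulliWeight p σ * ∏ w, g w (σ w)
      = ∏ w, (p * g w true + (1 - p) * g w false) := by
  simp only [bernoulliWeight, ← prod_mul_distrib]
  rw [← Fintype.prod_sum (fun w b => (if b then p else 1 - p) * g w b)]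
  simp

lemma sum_bernoulliWeight_mul_indicator_forall (p : ℝ) (W : Finset α) :
    ∑ σ : α → Bool, bernoulliWeight p σ * (if ∀ w ∈ W, σ w = false then 1 else 0)
      = (1 - p) ^ #W := by
  let g : α → Bool → ℝ := fun w b => if w ∈ W ∧ b = true then 0 else 1
  have hind (σ : α → Bool) :
      (if ∀ w ∈ W, σ w = false then (1 : ℝ) else 0) = ∏ w, g w (σ w) := by
    split_ifs with h
    · refine (prod_eq_one fun w _ => ?_).symm
      simp_all [g]
    · push Not at h
      obtain ⟨w, hw, hσw⟩ := h
      exact (prod_eq_zero (mem_univ w) (by simp_all [g])).symm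
  have hfactor (w : α) : p * g w true + (1 - p) * g w false = if w ∈ W then 1 - p else 1 := by
    by_cases hw : w ∈ W <;> simp [g, hw]
  simp_rw [hind, sum_bernoulliWeight_mul_prod, hfactor]
  rw [prod_ite_mem, univ_inter, prod_const]

lemma sum_bernoulliWeight (p : ℝ) : ∑ σ : α → Bool, bernoulliWeight p σ = 1 := by
  simpa using sum_bernoulliWeight_mul_prod p (fun _ _ => 1)

lemma sum_bernoulliWeight_mul_indicator_exists (p : ℝ) (W : Finset α) :
    ∑ σ : α → Bool, bernoulliWeight p σ * (if ∃ w ∈ W, σ w = true then 1 else 0)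
      = 1 - (1 - p) ^ #W := by
  have hcompl (σ : α → Bool) : (if ∃ w ∈ W, σ w = true then (1 : ℝ) else 0)
      = 1 - if ∀ w ∈ W, σ w = false then 1 else 0 := by
    by_cases h : ∃ w ∈ W, σ w = true
    · obtain ⟨w, hw, hσw⟩ := h
      rw [if_pos ⟨w, hw, hσw⟩, if_neg fun hall => by simp [hall w hw] at hσw, sub_zero]
    · rw [if_neg h, if_pos (by simpa using h), sub_self]
  simp_rw [hcompl, mul_sub, mul_one, sum_sub_distrib, sum_bernoulliWeight,
    sum_bernoulliWeight_mul_indicator_forall]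

end Bernoulli

section Voxel

variable {d n : ℕ}

noncomputable def coveringCubes (z : Fin d → ZMod n) (s : Fin d → Bool) :
    Finset (Fin d → ZMod n) :=
  Fintype.piFinset fun i => if s i then {z i} else {z i, z i - 1}

lemma mem_coveringCubes {w z : Fin d → ZMod n} {s : Fin d → Bool} :
    w ∈ coveringCubes z s ↔ containsCell w z s := by
  simp only [coveringCubes, Fintype.mem_piFinset, containsCell]
  refine forall_congr' fun i => ?_
  split <;> simp

lemma card_coveringCubes (hn : 1 < n) (z : Fin d → ZMod n) (s : Fin d → Bool) :
    #(coveringCubes z s) = 2 ^ (d - cellDim s) := by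
  have : Fact (1 < n) := ⟨hn⟩
  have hcard (i : Fin d) :
      #(if s i then ({z i} : Finset (ZMod n)) else {z i, z i - 1}) = if s i then 1 else 2 := by
    split
    · rfl
    · exact card_pair fun h => one_ne_zero (sub_eq_self.mp h.symm)
  have hdim : cellDim s + #{i | ¬s i = true} = d := by
    simpa [cellDim] using
      card_filter_add_card_filter_not (s := univ) (fun i : Fin d => s i = true)
  rw [coveringCubes, Fintype.card_piFinset, prod_congr rfl fun i _ => hcard i, prod_ite,
    prod_const_one, one_mul, prod_const]
  congr 1
  omega

lemma inComplex_eq_indicator (σ : (Fin d → ZMod n) → Bool) (z : Fin d → ZMod n)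
    (s : Fin d → Bool) :
    inComplex σ z s = if ∃ w ∈ coveringCubes z s, σ w = true then 1 else 0 := by
  simp only [inComplex, mem_coveringCubes, and_comm]

lemma Evox_inComplex [NeZero n] (hn : 1 < n) (p : ℝ) (z : Fin d → ZMod n) (s : Fin d → Bool) :
    Evox d n p (fun σ => inComplex σ z s) = 1 - (1 - p) ^ 2 ^ (d - cellDim s) := by
  rw [← card_coveringCubes hn z s, ← sum_bernoulliWeight_mul_indicator_exists]
  simp only [Evox, inComplex_eq_indicator, bernoulliWeight]

lemma Evox_Vvox [NeZero n] (p : ℝ) (j : ℕ) :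
    Evox d n p (Vvox d n j) = ∑ z, ∑ s : Fin d → Bool,
      (-1 : ℝ) ^ (cellDim s - j) * (cellDim s).choose j
        * Evox d n p (fun σ => inComplex σ z s) := by
  simp only [Evox, Vvox, mul_sum]
  rw [sum_comm]
  refine sum_congr rfl fun z _ => ?_
  rw [sum_comm]
  refine sum_congr rfl fun s _ => sum_congr rfl fun σ _ => ?_
  ring

lemma sum_apply_cellDim {M : Type*} [AddCommMonoid M] (f : ℕ → M) :
    ∑ s : Fin d → Bool, f (cellDim s) = ∑ δ ∈ range (d + 1), d.choose δ • f δ := by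
  have h := sum_powerset_apply_card f (x := (univ : Finset (Fin d)))
  rw [card_univ, Fintype.card_fin] at h
  rw [← h]
  refine sum_bij' (fun s _ => ({i | s i = true} : Finset (Fin d)))
    (fun t _ i => decide (i ∈ t)) ?_ ?_ ?_ ?_ ?_ <;> intros <;> simp [cellDim]

end Voxel

theorem stmt10_general (d n : ℕ) [NeZero n] (hn : 3 ≤ n)
    (j : ℕ) (p : ℝ) :
    Evox d n p (Vvox d n j)
      = ∑ δ ∈ Finset.Icc j d,
          (d.choose δ : ℝ) * (n : ℝ) ^ d * (1 - (1 - p) ^ (2 ^ (d - δ)))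
            * (-1 : ℝ) ^ (δ - j) * (δ.choose j : ℝ) := by
  calc Evox d n p (Vvox d n j)
      = ∑ _z : Fin d → ZMod n, ∑ s : Fin d → Bool,
          (-1 : ℝ) ^ (cellDim s - j) * (cellDim s).choose j
            * (1 - (1 - p) ^ 2 ^ (d - cellDim s)) := by
        simp only [Evox_Vvox, Evox_inComplex (by omega : 1 < n)]
    _ = ∑ δ ∈ range (d + 1), (d.choose δ : ℝ) * n ^ d * (1 - (1 - p) ^ 2 ^ (d - δ))
          * (-1) ^ (δ - j) * δ.choose j := by
        rw [sum_const, card_univ, sum_apply_cellDim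
          (fun δ => (-1 : ℝ) ^ (δ - j) * δ.choose j * (1 - (1 - p) ^ 2 ^ (d - δ))), smul_sum]
        refine sum_congr rfl fun δ _ => ?_
        simp only [Fintype.card_pi, ZMod.card, prod_const, card_univ, Fintype.card_fin,
          nsmul_eq_mul]
        push_cast
        ring
    _ = _ := by
        refine (sum_subset (fun δ hδ => ?_) fun δ hδd hδ => ?_).symm
        · simp only [mem_Icc, mem_range] at hδ ⊢
          omega
        · have hδj : δ < j := by
            simp only [mem_Icc, mem_range] at hδd hδ
            omega
          rw [Nat.choose_eq_zero_of_lt hδj, Nat.cast_zero, mul_zero]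

/-- Expected intrinsic volume in the voxel model:
`E[V_j(𝒞)] = Σ_{δ=j}^d C(d,δ) n^d (1 - q^{2^{d-δ}}) (-1)^{δ-j} C(δ,j)`, `q = 1-p`. -/
theorem stmt10 (d n : ℕ) [NeZero n] (hn : 3 ≤ n) (hd : 1 ≤ d)
    (j : ℕ) (hj : j ≤ d) (p : ℝ) (hp : p ∈ Set.Ioo (0 : ℝ) 1) :
    Evox d n p (Vvox d n j)
      = ∑ δ ∈ Finset.Icc j d,
          (d.choose δ : ℝ) * (n : ℝ) ^ d * (1 - (1 - p) ^ (2 ^ (d - δ)))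
            * (-1 : ℝ) ^ (δ - j) * (δ.choose j : ℝ) :=
  stmt10_general d n hn j p
end

section
/- Let N_{a,b,δ} := Σ_{ℓ=0}^{δ} (−1)^{δ−ℓ} C(δ,ℓ) C(ℓ,a) C(ℓ,b) 2^{δ+ℓ−a−b} for 0 ≤ a, b ≤ δ. Then for all 0 ≤ a, b ≤ m, Σ_{δ = max(a,b)}^{m} C(m,δ) 2^{m−δ} N_{a,b,δ} = C(m,a) 2^{m−a} · C(m,b) 2^{m−b}; i.e., summing N_{a,b,δ} over all δ-faces of an m-cube recovers the total number of pairs of an a-face and a b-face of the m-cube. -/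
/-!
Since `C(m,δ) C(δ,ℓ) = C(m,ℓ) C(m-ℓ,δ-ℓ)`, the alternating sum `Σ_δ (-1)^(δ-ℓ) C(m,δ) C(δ,ℓ)`
vanishes unless `ℓ = m` (binomial inversion). Absorbing the weight `2^(m-δ)` into `N_{a,b,δ}`
turns the left-hand side into a binomial transform followed by its inverse, applied to
`ℓ ↦ C(ℓ,a) C(ℓ,b) 2^(m+ℓ-a-b)`; so it equals the value of that function at `ℓ = m`.
-/

open Finset

/-- `N_{a,b,δ} := Σ_{ℓ=0}^δ (-1)^{δ-ℓ} C(δ,ℓ) C(ℓ,a) C(ℓ,b) 2^{δ+ℓ-a-b}`. -/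
def Nabδ (a b δ : ℕ) : ℤ :=
  ∑ ℓ ∈ Finset.range (δ + 1),
    (-1 : ℤ) ^ (δ - ℓ) * (δ.choose ℓ : ℤ) * (ℓ.choose a : ℤ) * (ℓ.choose b : ℤ)
      * 2 ^ (δ + ℓ - a - b)

theorem Int.alternating_sum_Ico_choose_mul_choose {ℓ m : ℕ} (h : ℓ ≤ m) :
    ∑ δ ∈ Ico ℓ (m + 1), (-1 : ℤ) ^ (δ - ℓ) * m.choose δ * δ.choose ℓ
      = if ℓ = m then 1 else 0 := by
  have hsplit : ∀ δ ∈ Ico ℓ (m + 1), (-1 : ℤ) ^ (δ - ℓ) * m.choose δ * δ.choose ℓ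
      = m.choose ℓ * ((-1) ^ (δ - ℓ) * (m - ℓ).choose (δ - ℓ)) := fun δ hδ => by
    rw [mul_assoc, ← Nat.cast_mul, Nat.choose_mul (mem_Ico.1 hδ).1]
    push_cast
    ring
  rw [sum_congr rfl hsplit, ← mul_sum, sum_Ico_eq_sum_range, show m + 1 - ℓ = m - ℓ + 1 by omega]
  simp only [Nat.add_sub_cancel_left]
  rw [Int.alternating_sum_range_choose]
  by_cases hℓ : ℓ = m
  · simp [hℓ]
  · simp [hℓ, show m - ℓ ≠ 0 by omega]

theorem sum_choose_mul_sum_alternating_choose {R : Type*} [CommRing R] (f : ℕ → R) (m : ℕ) :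
    ∑ δ ∈ range (m + 1), (m.choose δ : R) *
        ∑ ℓ ∈ range (δ + 1), (-1) ^ (δ - ℓ) * (δ.choose ℓ : R) * f ℓ = f m := by
  simp_rw [mul_sum, range_eq_Ico]
  rw [← sum_Ico_Ico_comm]
  have hinner : ∀ ℓ ∈ Ico 0 (m + 1), ∑ δ ∈ Ico ℓ (m + 1),
      (m.choose δ : R) * ((-1) ^ (δ - ℓ) * δ.choose ℓ * f ℓ) = if ℓ = m then f ℓ else 0 := by
    intro ℓ hℓ
    have := congrArg (Int.cast : ℤ → R)
      (Int.alternating_sum_Ico_choose_mul_choose (Nat.lt_succ_iff.1 (mem_Ico.1 hℓ).2))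
    push_cast at this
    rw [← boole_mul, ← this, sum_mul]
    exact sum_congr rfl fun δ _ => by ring
  rw [sum_congr rfl hinner, sum_ite_eq', if_pos (by simp)]

theorem Nat.choose_mul_choose_eq_zero_of_lt_max {ℓ a b : ℕ} (h : ℓ < max a b) :
    ℓ.choose a * ℓ.choose b = 0 := by
  rcases lt_max_iff.1 h with ha | hb
  · rw [Nat.choose_eq_zero_of_lt ha, zero_mul]
  · rw [Nat.choose_eq_zero_of_lt hb, mul_zero]

theorem Nabδ_eq_zero_of_lt_max {a b δ : ℕ} (h : δ < max a b) : Nabδ a b δ = 0 :=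
  sum_eq_zero fun ℓ hℓ => by
    have hab := Nat.choose_mul_choose_eq_zero_of_lt_max
      (lt_of_le_of_lt (Nat.lt_succ_iff.1 (mem_range.1 hℓ)) h)
    rw [mul_assoc _ (ℓ.choose a : ℤ), ← Nat.cast_mul, hab]
    simp

theorem two_pow_sub_mul_Nabδ {a b δ m : ℕ} (hδ : δ ≤ m) :
    2 ^ (m - δ) * Nabδ a b δ = ∑ ℓ ∈ range (δ + 1),
      (-1) ^ (δ - ℓ) * (δ.choose ℓ : ℤ) * ((ℓ.choose a * ℓ.choose b : ℕ) * 2 ^ (m + ℓ - a - b)) := by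
  rw [Nabδ, mul_sum]
  refine sum_congr rfl fun ℓ hℓ => ?_
  have hℓδ := Nat.lt_succ_iff.1 (mem_range.1 hℓ)
  rcases lt_or_ge ℓ (max a b) with hlt | hge
  · rw [Nat.choose_mul_choose_eq_zero_of_lt_max hlt, mul_assoc _ (ℓ.choose a : ℤ),
      ← Nat.cast_mul, Nat.choose_mul_choose_eq_zero_of_lt_max hlt]
    simp
  · have hpow : (2 : ℤ) ^ (m - δ) * 2 ^ (δ + ℓ - a - b) = 2 ^ (m + ℓ - a - b) := by
      rw [← pow_add]
      congr 1
      have := max_le_iff.1 hge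
      omega
    push_cast
    linear_combination ((-1) ^ (δ - ℓ) * (δ.choose ℓ : ℤ) * ℓ.choose a * ℓ.choose b) * hpow

/-- Summing `N_{a,b,δ}` over all `δ`-faces of an `m`-cube recovers the total
number of pairs of an `a`-face and a `b`-face:
`Σ_{δ=max(a,b)}^m C(m,δ) 2^{m-δ} N_{a,b,δ} = C(m,a) 2^{m-a} ⬝ C(m,b) 2^{m-b}`. -/
theorem stmt15 (a b m : ℕ) (ha : a ≤ m) (hb : b ≤ m) :
    ∑ δ ∈ Finset.Icc (max a b) m, (m.choose δ : ℤ) * 2 ^ (m - δ) * Nabδ a b δ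
      = (m.choose a : ℤ) * 2 ^ (m - a) * ((m.choose b : ℤ) * 2 ^ (m - b)) := by
  have hextend : ∑ δ ∈ Icc (max a b) m, (m.choose δ : ℤ) * 2 ^ (m - δ) * Nabδ a b δ
      = ∑ δ ∈ range (m + 1), (m.choose δ : ℤ) * 2 ^ (m - δ) * Nabδ a b δ := by
    refine sum_subset (fun δ hδ => mem_range.2 (Nat.lt_succ_of_le (mem_Icc.1 hδ).2))
      fun δ hδm hδ => ?_
    have hlt : δ < max a b := by
      simp only [mem_range, mem_Icc, not_and_or, not_le] at hδm hδ
      omega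
    rw [Nabδ_eq_zero_of_lt_max hlt, mul_zero]
  rw [hextend, sum_congr rfl fun δ hδ => by
      rw [mul_assoc, two_pow_sub_mul_Nabδ (Nat.lt_succ_iff.1 (mem_range.1 hδ))],
    sum_choose_mul_sum_alternating_choose
      (fun ℓ => ((ℓ.choose a * ℓ.choose b : ℕ) : ℤ) * 2 ^ (m + ℓ - a - b)),
    show m + m - a - b = (m - a) + (m - b) by omega]
  push_cast
  ring
end
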